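/- arXiv:1312.3025 — 3 statements merged into one kernel-verified Lean document; each statement's English description precedes it below -/
import Mathlib

section
/- For χ ∈ ℚ^r, the preorder ≥_χ on r-multipartitions of n is antisymmetric (i.e., Λ ≥_χ M and M ≥_χ Λ imply Λ = M) if and only if χ_i − χ_j ∉ {−(n−1), …, −1, 0, 1, …, n−1} for all i ≠ j, equivalently the multisets of shifted contents determine multipartitions uniquely. -/
open Finset

/-- Boxes of a multipartition, as triples (component, (row, col)). -/
def mbBoxes {r : ℕ} (Λ : Fin r → YoungDiagram) : Finset (Fin r × ℕ × ℕ) :=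
  Finset.univ.biUnion fun i => (Λ i).cells.image fun c => (i, c)

/-- Shifted content of a box (i, (y, x)): χ i + x - y. -/
def cont {r : ℕ} (χ : Fin r → ℚ) (b : Fin r × ℕ × ℕ) : ℚ :=
  χ b.1 + (b.2.2 : ℚ) - (b.2.1 : ℚ)

/-- Λ is an r-multipartition of n. -/
def isMP {r : ℕ} (n : ℕ) (Λ : Fin r → YoungDiagram) : Prop :=
  ∑ i, (Λ i).card = n

/-- The order ≥_χ : a bijection of boxes with contents of Λ-boxes dominating. -/
def contGE {r : ℕ} (χ : Fin r → ℚ) (Λ M : Fin r → YoungDiagram) : Prop :=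
  ∃ e : ↥(mbBoxes Λ) ≃ ↥(mbBoxes M),
    ∀ b : ↥(mbBoxes Λ), cont χ (b : Fin r × ℕ × ℕ) ≥ cont χ ((e b : Fin r × ℕ × ℕ))

/-- χ is generic for n: χ i - χ j avoids {0, ±1, …, ±(n-1)} for i ≠ j. -/
def generic (n : ℕ) {r : ℕ} (χ : Fin r → ℚ) : Prop :=
  ∀ i j : Fin r, i ≠ j → ∀ k : ℤ, k.natAbs < n → χ i - χ j ≠ (k : ℚ)

/-- Adjacency with explicit witnesses: Λ∖M lives in component l, M∖Λ in component m,
and they correspond under translation by (dy, dx). -/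
def adjWitness {r : ℕ} (Λ M : Fin r → YoungDiagram) (l m : Fin r) (dy dx : ℤ) : Prop :=
  (∀ i, i ≠ l → ∀ c ∈ (Λ i).cells, c ∈ (M i).cells) ∧
  (∀ i, i ≠ m → ∀ c ∈ (M i).cells, c ∈ (Λ i).cells) ∧
  (∀ y x : ℕ, ((y, x) ∈ (Λ l).cells ∧ (y, x) ∉ (M l).cells) ↔
    ∃ y' x' : ℕ, ((y', x') ∈ (M m).cells ∧ (y', x') ∉ (Λ m).cells) ∧
      (y' : ℤ) = (y : ℤ) + dy ∧ (x' : ℤ) = (x : ℤ) + dx)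

def adjacent {r : ℕ} (Λ M : Fin r → YoungDiagram) : Prop :=
  ∃ l m dy dx, adjWitness Λ M l m dy dx

/-- One step of the adjacency order. -/
def adjStep {r : ℕ} (χ : Fin r → ℚ) (Λ M : Fin r → YoungDiagram) : Prop :=
  adjacent Λ M ∧ contGE χ Λ M

/-- The adjacency order ⊵_χ : transitive closure of single steps. -/
def adjOrder {r : ℕ} (χ : Fin r → ℚ) : (Fin r → YoungDiagram) → (Fin r → YoungDiagram) → Prop :=
  Relation.ReflTransGen (adjStep χ)

/-- Multiset of shifted contents of the boxes of Λ. -/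
def contMultiset {r : ℕ} (χ : Fin r → ℚ) (Λ : Fin r → YoungDiagram) : Multiset ℚ :=
  (mbBoxes Λ).val.map (cont χ)

/-- χ lies in the asymptotic chamber: χ_i − χ_{i+1} > n − 1. -/
def asymptotic (n : ℕ) {r : ℕ} (χ : Fin r → ℚ) : Prop :=
  ∀ i : ℕ, ∀ h : i + 1 < r, χ ⟨i, Nat.lt_of_succ_lt h⟩ - χ ⟨i + 1, h⟩ > (n : ℚ) - 1

/-- Concatenated padded row-length sequence: Λ_{n·k+i} = λ^{k+1}_i (0-indexed here). -/
def rowSeq (n : ℕ) {r : ℕ} (Λ : Fin r → YoungDiagram) (t : ℕ) : ℕ :=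
  if h : t / n < r then (Λ ⟨t / n, h⟩).rowLen (t % n) else 0

/-- Shifted contents sorted in decreasing order. -/
def descContents {r : ℕ} (χ : Fin r → ℚ) (Λ : Fin r → YoungDiagram) : List ℚ :=
  (contMultiset χ Λ).sort (· ≥ ·)


section Aux

lemma ML {α : Type*} [DecidableEq α] (f : α → ℚ) :
    ∀ (n : ℕ) (S T : Finset α), S.card = n → S.val.map f = T.val.map f →
      ∃ e : ↥S ≃ ↥T, ∀ b : ↥S, f ↑b = f ↑(e b) := by
  intro n
  induction n with
  | zero =>
    intro S T hS hmap
    have hS0 : S = ∅ := Finset.card_eq_zero.1 hS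
    have hT0 : T = ∅ := by
      have : T.card = 0 := by
        have := congrArg Multiset.card hmap
        simpa [hS0] using this.symm
      exact Finset.card_eq_zero.1 this
    subst hS0; subst hT0
    haveI : IsEmpty (↥(∅ : Finset α)) := ⟨fun x => Finset.notMem_empty _ x.2⟩
    exact ⟨Equiv.equivOfIsEmpty _ _, fun b => isEmptyElim b⟩
  | succ n ih =>
    intro S T hS hmap
    have hSne : S.Nonempty := Finset.card_pos.1 (by omega)
    obtain ⟨a, haS⟩ := hSne
    have hfa : f a ∈ T.val.map f := by
      rw [← hmap]; exact Multiset.mem_map_of_mem f haS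
    obtain ⟨b, hbT, hfb⟩ := Multiset.mem_map.1 hfa
    have hbT' : b ∈ T := hbT
    have hmap' : (S.erase a).val.map f = (T.erase b).val.map f := by
      rw [Finset.erase_val, Finset.erase_val,
        Multiset.map_erase_of_mem f _ haS, Multiset.map_erase_of_mem f _ hbT, hfb, hmap]
    obtain ⟨e', he'⟩ := ih (S.erase a) (T.erase b) (by rw [Finset.card_erase_of_mem haS, hS]; omega) hmap'
    -- extend e' to S ≃ T
    have memS' : ∀ (x : ↥S), (x : α) ≠ a → (x : α) ∈ S.erase a :=
      fun x hx => Finset.mem_erase.2 ⟨hx, x.2⟩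
    set F : ↥S → ↥T := fun x =>
      if hx : (x : α) = a then ⟨b, hbT'⟩
      else ⟨(e' ⟨x, memS' x hx⟩ : α), Finset.mem_of_mem_erase (e' ⟨x, memS' x hx⟩).2⟩ with hF
    have hFne : ∀ (x : ↥S) (hx : (x : α) ≠ a), (F x : α) ∈ T.erase b := by
      intro x hx
      simp only [hF, dif_neg hx]
      exact (e' ⟨x, memS' x hx⟩).2
    have hinj : Function.Injective F := by
      intro x₁ x₂ h
      by_cases h1 : (x₁ : α) = a <;> by_cases h2 : (x₂ : α) = a
      · exact Subtype.ext (h1.trans h2.symm)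
      · exfalso
        have := hFne x₂ h2
        rw [← h] at this
        simp only [hF, dif_pos h1] at this
        exact (Finset.mem_erase.1 this).1 rfl
      · exfalso
        have := hFne x₁ h1
        rw [h] at this
        simp only [hF, dif_pos h2] at this
        exact (Finset.mem_erase.1 this).1 rfl
      · simp only [hF, dif_neg h1, dif_neg h2] at h
        simp only [Subtype.mk.injEq] at h
        have h'' := e'.injective (Subtype.ext h)
        simp only [Subtype.mk.injEq] at h''
        exact Subtype.ext h''
    have hsurj : Function.Surjective F := by
      intro y
      by_cases hy : (y : α) = b
      · exact ⟨⟨a, haS⟩, by simp only [hF, dif_pos]; exact Subtype.ext hy.symm⟩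
      · have hyT' : (y : α) ∈ T.erase b := Finset.mem_erase.2 ⟨hy, y.2⟩
        set u := e'.symm ⟨y, hyT'⟩ with hu
        have huS : (u : α) ∈ S := Finset.mem_of_mem_erase u.2
        have hune : ((⟨u, huS⟩ : ↥S) : α) ≠ a := (Finset.mem_erase.1 u.2).1
        refine ⟨⟨u, huS⟩, ?_⟩
        simp only [hF, dif_neg hune]
        have : (⟨(⟨u, huS⟩ : ↥S), memS' _ hune⟩ : ↥(S.erase a)) = u := Subtype.ext rfl
        rw [this, hu]
        simp only [Equiv.apply_symm_apply]
    refine ⟨Equiv.ofBijective F ⟨hinj, hsurj⟩, ?_⟩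
    intro x
    show f ↑x = f ↑(F x)
    by_cases hx : (x : α) = a
    · simp only [hF, dif_pos hx, hx, hfb]
    · simp only [hF, dif_neg hx]
      exact he' ⟨x, memS' x hx⟩

/-- helper: express contMultiset via univ over the subtype -/
lemma contMultiset_eq_univ_map {r : ℕ} (χ : Fin r → ℚ) (Λ : Fin r → YoungDiagram) :
    contMultiset χ Λ
      = Multiset.map (fun b : ↥(mbBoxes Λ) => cont χ b.val) (Finset.univ : Finset ↥(mbBoxes Λ)).val := by
  rw [Finset.univ_eq_attach]
  rw [contMultiset, Finset.attach_val]
  exact (Multiset.attach_map_val' _ _).symm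

lemma contGE_of_eq {r : ℕ} (χ : Fin r → ℚ) {Λ M : Fin r → YoungDiagram}
    (h : contMultiset χ Λ = contMultiset χ M) : contGE χ Λ M := by
  obtain ⟨e, he⟩ := ML (cont χ) (mbBoxes Λ).card (mbBoxes Λ) (mbBoxes M) rfl h
  exact ⟨e, fun b => (he b).ge⟩

lemma eq_of_contGE {r : ℕ} (χ : Fin r → ℚ) {Λ M : Fin r → YoungDiagram}
    (h1 : contGE χ Λ M) (h2 : contGE χ M Λ) : contMultiset χ Λ = contMultiset χ M := by
  obtain ⟨e, he⟩ := h1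
  obtain ⟨e₂, he₂⟩ := h2
  have hs1 : ∑ b : ↥(mbBoxes Λ), cont χ ((e b : Fin r × ℕ × ℕ))
      = ∑ c : ↥(mbBoxes M), cont χ (c : Fin r × ℕ × ℕ) :=
    Equiv.sum_comp e (fun c : ↥(mbBoxes M) => cont χ (c : Fin r × ℕ × ℕ))
  have hs2 : ∑ b : ↥(mbBoxes M), cont χ ((e₂ b : Fin r × ℕ × ℕ))
      = ∑ c : ↥(mbBoxes Λ), cont χ (c : Fin r × ℕ × ℕ) :=
    Equiv.sum_comp e₂ (fun c : ↥(mbBoxes Λ) => cont χ (c : Fin r × ℕ × ℕ))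
  have hle1 : ∑ b : ↥(mbBoxes Λ), cont χ ((e b : Fin r × ℕ × ℕ))
      ≤ ∑ b : ↥(mbBoxes Λ), cont χ (b : Fin r × ℕ × ℕ) :=
    Finset.sum_le_sum (fun b _ => he b)
  have hle2 : ∑ b : ↥(mbBoxes M), cont χ ((e₂ b : Fin r × ℕ × ℕ))
      ≤ ∑ b : ↥(mbBoxes M), cont χ (b : Fin r × ℕ × ℕ) :=
    Finset.sum_le_sum (fun b _ => he₂ b)
  have hsumeq : ∑ b : ↥(mbBoxes Λ), cont χ ((e b : Fin r × ℕ × ℕ))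
      = ∑ b : ↥(mbBoxes Λ), cont χ (b : Fin r × ℕ × ℕ) := by
    rw [hs1]; rw [hs1] at hle1; rw [hs2] at hle2; linarith
  have hpt : ∀ b ∈ (Finset.univ : Finset ↥(mbBoxes Λ)),
      cont χ ((e b : Fin r × ℕ × ℕ)) = cont χ (b : Fin r × ℕ × ℕ) :=
    (Finset.sum_eq_sum_iff_of_le (fun b _ => he b)).1 hsumeq
  rw [contMultiset_eq_univ_map, contMultiset_eq_univ_map]
  have huniv : (Finset.univ : Finset ↥(mbBoxes M)).val
      = Multiset.map e.toEmbedding (Finset.univ : Finset ↥(mbBoxes Λ)).val := by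
    rw [← Finset.map_val, Finset.map_univ_equiv]
  rw [huniv, Multiset.map_map]
  apply Multiset.map_congr rfl
  intro b hb
  exact (hpt b (Finset.mem_univ b)).symm


/-- Number of cells of `D` on the diagonal of content `a`. -/
def diagCt (D : YoungDiagram) (a : ℤ) : ℕ :=
  (D.cells.filter (fun c => (c.2 : ℤ) - (c.1 : ℤ) = a)).card

lemma dc_mem_iff {s : Finset ℕ} (h : ∀ m, m + 1 ∈ s → m ∈ s) (m : ℕ) :
    m ∈ s ↔ m < s.card := by
  have h' : ∀ d k, k + d ∈ s → k ∈ s := by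
    intro d
    induction d with
    | zero => intro k hk; rwa [Nat.add_zero] at hk
    | succ d ih => intro k hk; exact ih k (h (k + d) hk)
  constructor
  · intro hm
    have hsub : Finset.range (m + 1) ⊆ s := by
      intro k hk
      rw [Finset.mem_range] at hk
      exact h' (m - k) k (by rwa [Nat.add_sub_cancel' (by omega)])
    have := Finset.card_le_card hsub
    simpa using this
  · intro hm
    by_contra hms
    have hsub : s ⊆ Finset.range m := by
      intro t ht
      rw [Finset.mem_range]
      by_contra ht'
      exact hms (h' (t - m) m (by rwa [Nat.add_sub_cancel' (by omega)]))
    have := Finset.card_le_card hsub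
    simp at this
    omega

lemma row_col_bound {D : YoungDiagram} {y x : ℕ} (h : (y, x) ∈ D) :
    x + 1 ≤ D.card ∧ y + 1 ≤ D.card := by
  constructor
  · have hsub : (Finset.range (x + 1)).image (fun j => ((0 : ℕ), j)) ⊆ D.cells := by
      intro c hc
      simp only [Finset.mem_image, Finset.mem_range] at hc
      obtain ⟨j, hj, rfl⟩ := hc
      exact D.up_left_mem (Nat.zero_le _) (by omega) h
    have := Finset.card_le_card hsub
    rwa [Finset.card_image_of_injective _ (fun a b hab => by simpa using hab),
      Finset.card_range] at this
  · have hsub : (Finset.range (y + 1)).image (fun j => (j, (0 : ℕ))) ⊆ D.cells := by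
      intro c hc
      simp only [Finset.mem_image, Finset.mem_range] at hc
      obtain ⟨j, hj, rfl⟩ := hc
      exact D.up_left_mem (by omega) (Nat.zero_le _) h
    have := Finset.card_le_card hsub
    rwa [Finset.card_image_of_injective _ (fun a b hab => by simpa using hab),
      Finset.card_range] at this

lemma diagCt_ne_zero_iff {D : YoungDiagram} {a : ℤ} :
    diagCt D a ≠ 0 ↔ ∃ y x : ℕ, (y, x) ∈ D ∧ (x : ℤ) - (y : ℤ) = a := by
  rw [diagCt, Ne, Finset.card_eq_zero, ← Ne, ← Finset.nonempty_iff_ne_empty]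
  constructor
  · rintro ⟨⟨y, x⟩, hc⟩
    rw [Finset.mem_filter] at hc
    exact ⟨y, x, hc.1, hc.2⟩
  · rintro ⟨y, x, hm, ha⟩
    exact ⟨(y, x), Finset.mem_filter.2 ⟨hm, ha⟩⟩

lemma mem_iff_lt_diagCt {D : YoungDiagram} {y x : ℕ} :
    (y, x) ∈ D ↔ min y x < diagCt D ((x : ℤ) - (y : ℤ)) := by
  set a : ℤ := (x : ℤ) - (y : ℤ) with ha
  set S := D.cells.filter (fun c => (c.2 : ℤ) - (c.1 : ℤ) = a) with hS
  set φ : ℕ × ℕ → ℕ := fun c => min c.1 c.2 with hφ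
  have hinj : Set.InjOn φ S := by
    rintro ⟨y₁, x₁⟩ h₁ ⟨y₂, x₂⟩ h₂ hm
    simp only [hS, Finset.coe_filter, Set.mem_setOf_eq] at h₁ h₂
    have e₁ := h₁.2; have e₂ := h₂.2
    simp only [hφ] at hm
    have : y₁ = y₂ ∧ x₁ = x₂ := by omega
    simp [this.1, this.2]
  have hdc : ∀ m, m + 1 ∈ S.image φ → m ∈ S.image φ := by
    intro m hm
    rw [Finset.mem_image] at hm
    obtain ⟨⟨y₁, x₁⟩, hc, hφc⟩ := hm
    rw [hS, Finset.mem_filter] at hc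
    simp only [hφ] at hφc
    have hy₁ : 1 ≤ y₁ := by omega
    have hx₁ : 1 ≤ x₁ := by omega
    have hmem : (y₁ - 1, x₁ - 1) ∈ D.cells :=
      D.up_left_mem (by omega) (by omega) hc.1
    refine Finset.mem_image.2 ⟨(y₁ - 1, x₁ - 1), ?_, ?_⟩
    · rw [hS, Finset.mem_filter]
      refine ⟨hmem, ?_⟩
      have := hc.2
      push_cast [Nat.cast_sub hy₁, Nat.cast_sub hx₁]
      simp only at this ⊢
      omega
    · simp only [hφ]; omega
  have hcard : (S.image φ).card = S.card := Finset.card_image_of_injOn hinj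
  have hmem_iff : (y, x) ∈ D ↔ min y x ∈ S.image φ := by
    constructor
    · intro h
      refine Finset.mem_image.2 ⟨(y, x), ?_, rfl⟩
      rw [hS, Finset.mem_filter]
      exact ⟨h, rfl⟩
    · intro h
      rw [Finset.mem_image] at h
      obtain ⟨⟨y₁, x₁⟩, hc, hφc⟩ := h
      rw [hS, Finset.mem_filter] at hc
      have e₁ := hc.2
      simp only [hφ] at hφc
      have : y₁ = y ∧ x₁ = x := by omega
      rw [← this.1, ← this.2]
      exact hc.1
  rw [hmem_iff, dc_mem_iff hdc, hcard]
  rfl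

lemma exists_box_content_le {D : YoungDiagram} {y x : ℕ} (h : (y, x) ∈ D) {e : ℤ}
    (h1 : (x : ℤ) - (y : ℤ) ≤ e) (h2 : e ≤ 0) : diagCt D e ≠ 0 := by
  rw [diagCt_ne_zero_iff]
  refine ⟨((x : ℤ) - e).toNat, x, ?_, ?_⟩
  · apply D.up_left_mem _ le_rfl h
    omega
  · omega

lemma count_contMultiset {r : ℕ} (χ : Fin r → ℚ) (Λ : Fin r → YoungDiagram) (q : ℚ) :
    Multiset.count q (contMultiset χ Λ)
      = ∑ i, ((Λ i).cells.filter (fun c : ℕ × ℕ => q = χ i + (c.2 : ℚ) - (c.1 : ℚ))).card := by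
  rw [contMultiset, Multiset.count_map]
  have h1 : (mbBoxes Λ).val.filter (fun b => q = cont χ b)
      = ((mbBoxes Λ).filter (fun b => q = cont χ b)).val := rfl
  rw [h1]
  show ((mbBoxes Λ).filter (fun b => q = cont χ b)).card = _
  rw [mbBoxes, Finset.filter_biUnion]
  rw [Finset.card_biUnion]
  · apply Finset.sum_congr rfl
    intro i _
    rw [Finset.filter_image]
    rw [Finset.card_image_of_injective _ (fun a b hab => by simpa using hab)]
    rfl
  · intro i _ j _ hij
    simp only [Finset.disjoint_left]
    intro b hb hb'
    simp only [Finset.mem_filter, Finset.mem_image] at hb hb'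
    obtain ⟨⟨c, _, rfl⟩, _⟩ := hb
    obtain ⟨⟨c', _, hc'⟩, _⟩ := hb'
    exact hij (by simpa using congrArg Prod.fst hc'.symm)

lemma filter_card_eq_diagCt {D : YoungDiagram} {χi q : ℚ} {a : ℤ} (ha : χi + a = q) :
    (D.cells.filter (fun c : ℕ × ℕ => q = χi + (c.2 : ℚ) - (c.1 : ℚ))).card = diagCt D a := by
  rw [diagCt]
  congr 1
  apply Finset.filter_congr
  intro c _
  subst ha
  constructor
  · intro h
    have h2 : ((a : ℚ)) = (c.2 : ℚ) - (c.1 : ℚ) := by linarith [h]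
    have h3 : ((a : ℚ)) = (((c.2 : ℤ) - (c.1 : ℤ) : ℤ) : ℚ) := by push_cast; linarith [h2]
    exact (Rat.intCast_injective h3).symm
  · intro h
    have h2 : (((c.2 : ℤ) - (c.1 : ℤ) : ℤ) : ℚ) = (a : ℚ) := congrArg _ h
    push_cast at h2
    linarith [h2]

lemma filter_card_eq_zero {D : YoungDiagram} {χi q : ℚ} (h : ∀ a : ℤ, χi + a ≠ q) :
    (D.cells.filter (fun c : ℕ × ℕ => q = χi + (c.2 : ℚ) - (c.1 : ℚ))).card = 0 := by
  rw [Finset.card_eq_zero, Finset.filter_eq_empty_iff]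
  intro c _
  intro hq
  exact h ((c.2 : ℤ) - (c.1 : ℤ)) (by push_cast; linarith [hq])

lemma card_le_of_isMP {n r : ℕ} {X : Fin r → YoungDiagram} (hX : isMP n X) (i : Fin r) :
    (X i).card ≤ n := by
  rw [← hX]
  exact Finset.single_le_sum (f := fun i => (X i).card) (fun i _ => Nat.zero_le _)
    (Finset.mem_univ i)

lemma pair_card_le {n r : ℕ} {X : Fin r → YoungDiagram} (hX : isMP n X) {i j : Fin r}
    (hij : i ≠ j) : (X i).card + (X j).card ≤ n := by
  rw [← hX]
  have h2 := Finset.sum_le_sum_of_subset (f := fun i => (X i).card) (Finset.subset_univ {i, j})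
  rwa [Finset.sum_pair hij] at h2

lemma bound_of_diagCt {n r : ℕ} {X : Fin r → YoungDiagram} (hX : isMP n X) (i : Fin r) {a : ℤ}
    (h : diagCt (X i) a ≠ 0) : 1 - (n : ℤ) ≤ a ∧ a ≤ (n : ℤ) - 1 := by
  obtain ⟨y, x, hm, ha⟩ := diagCt_ne_zero_iff.1 h
  obtain ⟨hx, hy⟩ := row_col_bound hm
  have hcard := card_le_of_isMP hX i
  omega

lemma key2 {n r : ℕ} {X : Fin r → YoungDiagram} (hX : isMP n X) {i₀ i₁ : Fin r} (h01 : i₀ ≠ i₁)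
    {a₀ a₁ : ℤ} (hgap : a₀ + (n : ℤ) ≤ a₁) (ha1 : 0 ≤ a₁)
    (hb1 : diagCt (X i₁) a₁ ≠ 0) (hb0 : diagCt (X i₀) (a₀ + 1) ≠ 0) : False := by
  obtain ⟨y, x, hm, ha⟩ := diagCt_ne_zero_iff.1 hb1
  obtain ⟨y', x', hm', ha'⟩ := diagCt_ne_zero_iff.1 hb0
  obtain ⟨hx, _⟩ := row_col_bound hm
  obtain ⟨_, hy'⟩ := row_col_bound hm'
  have hpair := pair_card_le hX h01
  omega

lemma key {n r : ℕ} {Λ M : Fin r → YoungDiagram}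
    (hΛ : isMP n Λ) (hM : isMP n M) {i₀ i₁ : Fin r} (h01 : i₀ ≠ i₁) {a₀ a₁ : ℤ}
    (hgap : a₀ + (n : ℤ) ≤ a₁)
    (hmax : ∀ e : ℤ, a₀ < e → e ≤ 0 → diagCt (Λ i₀) e = diagCt (M i₀) e)
    (h0 : diagCt (Λ i₀) a₀ ≠ 0 ∨ diagCt (M i₀) a₀ ≠ 0)
    (h1 : diagCt (Λ i₁) a₁ ≠ 0 ∨ diagCt (M i₁) a₁ ≠ 0) : False := by
  have ha₀lb : 1 - (n : ℤ) ≤ a₀ := by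
    rcases h0 with h | h
    · exact (bound_of_diagCt hΛ i₀ h).1
    · exact (bound_of_diagCt hM i₀ h).1
  have ha₁ub : a₁ ≤ (n : ℤ) - 1 := by
    rcases h1 with h | h
    · exact (bound_of_diagCt hΛ i₁ h).2
    · exact (bound_of_diagCt hM i₁ h).2
  have ha₀ : a₀ + 1 ≤ 0 := by omega
  have ha₁ : 0 ≤ a₁ := by omega
  -- a box of content a₀ + 1 exists in both Λ i₀ and M i₀
  have h0' : diagCt (Λ i₀) (a₀ + 1) ≠ 0 ∧ diagCt (M i₀) (a₀ + 1) ≠ 0 := by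
    have heq := hmax (a₀ + 1) (by omega) ha₀
    rcases h0 with h | h
    · obtain ⟨y, x, hm, ha⟩ := diagCt_ne_zero_iff.1 h
      have := exists_box_content_le hm (e := a₀ + 1) (by omega) ha₀
      exact ⟨this, by rwa [heq] at this⟩
    · obtain ⟨y, x, hm, ha⟩ := diagCt_ne_zero_iff.1 h
      have := exists_box_content_le hm (e := a₀ + 1) (by omega) ha₀
      exact ⟨by rwa [← heq] at this, this⟩
  rcases h1 with h | h
  · exact key2 hΛ h01 hgap ha₁ h h0'.1
  · exact key2 hM h01 hgap ha₁ h h0'.2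

lemma generic_inj {n r : ℕ} {χ : Fin r → ℚ} (hgen : generic n χ) {Λ M : Fin r → YoungDiagram}
    (hΛ : isMP n Λ) (hM : isMP n M) (hc : contMultiset χ Λ = contMultiset χ M) : Λ = M := by
  suffices hd : ∀ (i : Fin r) (a : ℤ), diagCt (Λ i) a = diagCt (M i) a by
    funext i
    ext ⟨y, x⟩
    rw [YoungDiagram.mem_cells, YoungDiagram.mem_cells, mem_iff_lt_diagCt, mem_iff_lt_diagCt,
      hd i]
  by_contra hcon
  push_neg at hcon
  classical
  set DS : Finset (Fin r × ℤ) :=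
    (Finset.univ ×ˢ Finset.Icc (1 - (n : ℤ)) ((n : ℤ) - 1)).filter
      (fun p => diagCt (Λ p.1) p.2 ≠ diagCt (M p.1) p.2) with hDS
  have mem_DS : ∀ (i : Fin r) (a : ℤ), diagCt (Λ i) a ≠ diagCt (M i) a → (i, a) ∈ DS := by
    intro i a hia
    have hb : 1 - (n : ℤ) ≤ a ∧ a ≤ (n : ℤ) - 1 := by
      rcases Nat.eq_zero_or_pos (diagCt (Λ i) a) with h | h
      · exact bound_of_diagCt hM i (by omega)
      · exact bound_of_diagCt hΛ i (by omega)
    rw [hDS, Finset.mem_filter]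
    exact ⟨Finset.mem_product.2 ⟨Finset.mem_univ _, Finset.mem_Icc.2 hb⟩, hia⟩
  have hne : DS.Nonempty := by
    obtain ⟨i, a, hia⟩ := hcon
    exact ⟨(i, a), mem_DS i a hia⟩
  obtain ⟨p₀, hp₀, hmax⟩ := Finset.exists_max_image DS (fun p => χ p.1 + (p.2 : ℚ)) hne
  obtain ⟨i₀, a₀⟩ := p₀
  set q : ℚ := χ i₀ + (a₀ : ℚ) with hq
  have hp₀' : diagCt (Λ i₀) a₀ ≠ diagCt (M i₀) a₀ := (Finset.mem_filter.1 hp₀).2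
  -- counts are equal
  have hcount : ∀ i : Fin r,
      ((Λ i).cells.filter (fun c : ℕ × ℕ => q = χ i + (c.2 : ℚ) - (c.1 : ℚ))).card
        = ((M i).cells.filter (fun c : ℕ × ℕ => q = χ i + (c.2 : ℚ) - (c.1 : ℚ))).card
      → True := fun _ _ => trivial
  have hsum : ∑ i, ((Λ i).cells.filter (fun c : ℕ × ℕ => q = χ i + (c.2 : ℚ) - (c.1 : ℚ))).card
      = ∑ i, ((M i).cells.filter (fun c : ℕ × ℕ => q = χ i + (c.2 : ℚ) - (c.1 : ℚ))).card := by
    rw [← count_contMultiset, ← count_contMultiset, hc]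
  -- the i₀ terms differ
  have hdiff₀ : ((Λ i₀).cells.filter (fun c : ℕ × ℕ => q = χ i₀ + (c.2 : ℚ) - (c.1 : ℚ))).card
      ≠ ((M i₀).cells.filter (fun c : ℕ × ℕ => q = χ i₀ + (c.2 : ℚ) - (c.1 : ℚ))).card := by
    rw [filter_card_eq_diagCt rfl, filter_card_eq_diagCt rfl]
    exact hp₀'
  -- find another differing component
  have hex : ∃ i₁ : Fin r, i₁ ≠ i₀ ∧
      ((Λ i₁).cells.filter (fun c : ℕ × ℕ => q = χ i₁ + (c.2 : ℚ) - (c.1 : ℚ))).card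
        ≠ ((M i₁).cells.filter (fun c : ℕ × ℕ => q = χ i₁ + (c.2 : ℚ) - (c.1 : ℚ))).card := by
    by_contra hcon2
    push_neg at hcon2
    apply hdiff₀
    have h1 : ∑ i ∈ Finset.univ.erase i₀,
        ((Λ i).cells.filter (fun c : ℕ × ℕ => q = χ i + (c.2 : ℚ) - (c.1 : ℚ))).card
        = ∑ i ∈ Finset.univ.erase i₀,
        ((M i).cells.filter (fun c : ℕ × ℕ => q = χ i + (c.2 : ℚ) - (c.1 : ℚ))).card :=
      Finset.sum_congr rfl (fun i hi => hcon2 i (Finset.mem_erase.1 hi).1)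
    have h2 := hsum
    rw [← Finset.add_sum_erase _ _ (Finset.mem_univ i₀),
      ← Finset.add_sum_erase _ _ (Finset.mem_univ i₀)] at h2
    omega
  obtain ⟨i₁, hi₁ne, hdiff₁⟩ := hex
  -- extract the integer a₁
  have hexa : ∃ a₁ : ℤ, χ i₁ + (a₁ : ℚ) = q := by
    by_contra hcon3
    push_neg at hcon3
    apply hdiff₁
    rw [filter_card_eq_zero hcon3, filter_card_eq_zero hcon3]
  obtain ⟨a₁, ha₁q⟩ := hexa
  have hdiag₁ : diagCt (Λ i₁) a₁ ≠ diagCt (M i₁) a₁ := by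
    rw [← filter_card_eq_diagCt ha₁q, ← filter_card_eq_diagCt ha₁q]
    exact hdiff₁
  have hmem₁ : (i₁, a₁) ∈ DS := mem_DS i₁ a₁ hdiag₁
  -- genericity gives a gap
  have hgap : a₀ + (n : ℤ) ≤ a₁ ∨ a₁ + (n : ℤ) ≤ a₀ := by
    have hdq : χ i₀ - χ i₁ = ((a₁ - a₀ : ℤ) : ℚ) := by
      push_cast
      rw [hq] at ha₁q
      linarith [ha₁q]
    have := hgen i₀ i₁ (Ne.symm hi₁ne) (a₁ - a₀)
    by_contra hcon4
    push_neg at hcon4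
    exact this (by omega) hdq
  -- maximality transfers
  have hmaxΛ : ∀ (i : Fin r) (a : ℤ), q < χ i + (a : ℚ) → 1 - (n : ℤ) ≤ a → a ≤ (n : ℤ) - 1 →
      diagCt (Λ i) a = diagCt (M i) a := by
    intro i a hqa hlb hub
    by_contra hne'
    have := hmax (i, a) (mem_DS i a hne')
    simp only at this
    linarith [this]
  have hn1 : 1 ≤ n := by
    have : diagCt (Λ i₀) a₀ ≠ 0 ∨ diagCt (M i₀) a₀ ≠ 0 := by omega
    rcases this with h | h
    · obtain ⟨y, x, hm, _⟩ := diagCt_ne_zero_iff.1 h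
      have := (row_col_bound hm).1
      have := card_le_of_isMP hΛ i₀
      omega
    · obtain ⟨y, x, hm, _⟩ := diagCt_ne_zero_iff.1 h
      have := (row_col_bound hm).1
      have := card_le_of_isMP hM i₀
      omega
  have hIcc₀ : 1 - (n : ℤ) ≤ a₀ ∧ a₀ ≤ (n : ℤ) - 1 := by
    have := (Finset.mem_product.1 (Finset.mem_filter.1 hp₀).1).2
    exact Finset.mem_Icc.1 this
  have hIcc₁ : 1 - (n : ℤ) ≤ a₁ ∧ a₁ ≤ (n : ℤ) - 1 := by
    have := (Finset.mem_product.1 (Finset.mem_filter.1 hmem₁).1).2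
    exact Finset.mem_Icc.1 this
  rcases hgap with hgap | hgap
  · -- a₁ is bigger: i₀ is the "low" component
    refine key hΛ hM (Ne.symm hi₁ne) hgap ?_ (by omega) (by omega)
    intro e he hle
    apply hmaxΛ i₀ e _ (by omega) (by omega)
    rw [hq]
    have : (a₀ : ℚ) < (e : ℚ) := by exact_mod_cast he
    linarith
  · -- a₀ is bigger: i₁ is the "low" component
    refine key hΛ hM hi₁ne hgap ?_ (by omega) (by omega)
    intro e he hle
    apply hmaxΛ i₁ e _ (by omega) (by omega)
    rw [← ha₁q]
    have : (a₁ : ℚ) < (e : ℚ) := by exact_mod_cast he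
    linarith

lemma disjUnion_val' {α : Type*} (s t : Finset α) (h : Disjoint s t) :
    (s.disjUnion t h).val = s.val + t.val := rfl

lemma hook_disj (a b : ℕ) :
    Disjoint ((Finset.range (a + 1)).image (fun x => ((0 : ℕ), x)))
      ((Finset.range b).image (fun y => (y + 1, (0 : ℕ)))) := by
  simp only [Finset.disjoint_left, Finset.mem_image, Finset.mem_range]
  rintro c ⟨x, hx, rfl⟩ ⟨y, hy, hc⟩
  exact Nat.succ_ne_zero y (congrArg Prod.fst hc)

/-- The hook diagram with arm `a` and leg `b`: row 0 of length `a+1`, column of `b` extra cells. -/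
def hookYD (a b : ℕ) : YoungDiagram where
  cells := ((Finset.range (a + 1)).image (fun x => ((0 : ℕ), x))).disjUnion
    ((Finset.range b).image (fun y => (y + 1, (0 : ℕ)))) (hook_disj a b)
  isLowerSet := by
    rintro ⟨y₂, x₂⟩ ⟨y₁, x₁⟩ hle hmem
    simp only [Finset.coe_disjUnion, Set.mem_union, Finset.coe_image, Set.mem_image,
      Finset.coe_range, Set.mem_Iio] at hmem ⊢
    obtain ⟨hy, hx⟩ := hle
    simp only at hy hx
    rcases hmem with ⟨x, hx', hc⟩ | ⟨y, hy', hc⟩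
    · injection hc with h1 h2
      left
      exact ⟨x₁, by omega, by ext <;> simp <;> omega⟩
    · injection hc with h1 h2
      rcases Nat.eq_zero_or_pos y₁ with h | h
      · left; exact ⟨0, by omega, by ext <;> simp <;> omega⟩
      · right; exact ⟨y₁ - 1, by omega, by ext <;> simp <;> omega⟩

lemma hookYD_cells (a b : ℕ) :
    (hookYD a b).cells = ((Finset.range (a + 1)).image (fun x => ((0 : ℕ), x))).disjUnion
      ((Finset.range b).image (fun y => (y + 1, (0 : ℕ)))) (hook_disj a b) := rfl

lemma hookYD_card (a b : ℕ) : (hookYD a b).card = a + 1 + b := by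
  rw [YoungDiagram.card, hookYD_cells, Finset.card_disjUnion,
    Finset.card_image_of_injective _ (fun u v huv => by simpa using huv),
    Finset.card_image_of_injective _ (fun u v huv => by simpa using huv),
    Finset.card_range, Finset.card_range]

lemma hookYD_contents (χv : ℚ) (a b : ℕ) :
    (hookYD a b).cells.val.map (fun c : ℕ × ℕ => χv + (c.2 : ℚ) - (c.1 : ℚ))
      = (Multiset.range (a + 1)).map (fun x : ℕ => χv + (x : ℚ))
        + (Multiset.range b).map (fun y : ℕ => χv - ((y : ℚ) + 1)) := by
  rw [hookYD_cells, disjUnion_val', Multiset.map_add]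
  congr 1
  · rw [Finset.image_val_of_injOn (by intro u _ v _ huv; simp only at huv; simpa using huv),
      Multiset.map_map, ← Finset.range_val]
    simp
  · rw [Finset.image_val_of_injOn (by intro u _ v _ huv; simp only at huv; simpa using huv),
      Multiset.map_map, ← Finset.range_val]
    apply Multiset.map_congr rfl
    intro y _
    simp only [Function.comp_apply]
    push_cast
    ring

/-- reflection of a map over a range -/
lemma map_range_reflect (f : ℕ → ℚ) (m : ℕ) :
    (Multiset.range m).map f = (Multiset.range m).map (fun t => f (m - 1 - t)) := by
  have himg : (Finset.range m).image (fun t => m - 1 - t) = Finset.range m := by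
    apply Finset.Subset.antisymm
    · intro t ht
      simp only [Finset.mem_image, Finset.mem_range] at ht ⊢
      obtain ⟨u, hu, rfl⟩ := ht
      omega
    · intro t ht
      simp only [Finset.mem_image, Finset.mem_range] at ht ⊢
      exact ⟨m - 1 - t, by omega, by omega⟩
  have hval : (Multiset.range m).map (fun t => m - 1 - t) = Multiset.range m := by
    rw [← Finset.range_val, ← Finset.image_val_of_injOn, himg]
    intro u hu v hv huv
    simp only [Finset.coe_range, Set.mem_Iio] at hu hv
    simp only at huv
    omega
  conv_lhs => rw [← hval, Multiset.map_map]
  simp [Function.comp]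

lemma contMultiset_single {r : ℕ} (χ : Fin r → ℚ) (i : Fin r) (D : YoungDiagram) :
    contMultiset χ (fun t => if t = i then D else ⊥)
      = D.cells.val.map (fun c : ℕ × ℕ => χ i + (c.2 : ℚ) - (c.1 : ℚ)) := by
  classical
  have hmb : mbBoxes (fun t => if t = i then D else ⊥) = D.cells.image (fun c => (i, c)) := by
    ext b
    simp only [mbBoxes, Finset.mem_biUnion, Finset.mem_univ, true_and, Finset.mem_image]
    constructor
    · rintro ⟨t, c, hc, rfl⟩
      by_cases ht : t = i
      · subst ht
        rw [if_pos rfl] at hc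
        exact ⟨c, hc, rfl⟩
      · rw [if_neg ht] at hc
        simp [YoungDiagram.cells_bot] at hc
    · rintro ⟨c, hc, rfl⟩
      exact ⟨i, ⟨c, by rw [if_pos rfl]; exact hc, rfl⟩⟩
  rw [contMultiset, hmb,
    Finset.image_val_of_injOn (by intro u _ v _ huv; simpa using huv), Multiset.map_map]
  apply Multiset.map_congr rfl
  intro c _
  rfl

lemma mp_single {n r : ℕ} (i : Fin r) (D : YoungDiagram) (hD : D.card = n) :
    isMP n (fun t => if t = i then D else ⊥) := by
  classical
  rw [isMP, Finset.sum_eq_single i]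
  · rw [if_pos rfl]; exact hD
  · intro t _ ht
    rw [if_neg ht]
    rw [YoungDiagram.card, YoungDiagram.cells_bot, Finset.card_empty]
  · intro h; exact absurd (Finset.mem_univ i) h

lemma hook_counterexample {n r : ℕ} {χ : Fin r → ℚ} (i j : Fin r) (hij : i ≠ j) (kk : ℕ)
    (hkn : kk < n) (hkeq : χ i = χ j + (kk : ℚ)) :
    ∃ Λ M : Fin r → YoungDiagram, isMP n Λ ∧ isMP n M ∧
      contMultiset χ Λ = contMultiset χ M ∧ Λ ≠ M := by
  classical
  have hn1 : 1 ≤ n := by omega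
  refine ⟨(fun t => if t = i then hookYD 0 (n - 1) else ⊥),
    (fun t => if t = j then hookYD kk (n - 1 - kk) else ⊥), ?_, ?_, ?_, ?_⟩
  · exact mp_single i _ (by rw [hookYD_card]; omega)
  · exact mp_single j _ (by rw [hookYD_card]; omega)
  · rw [contMultiset_single, contMultiset_single, hookYD_contents, hookYD_contents]
    have key1 : (Multiset.range 1).map (fun x : ℕ => χ i + (x : ℚ))
        + (Multiset.range (n - 1)).map (fun y : ℕ => χ i - ((y : ℚ) + 1))
        = (Multiset.range n).map (fun t : ℕ => χ i - (t : ℚ)) := by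
      have hsplit : n = 1 + (n - 1) := by omega
      conv_rhs => rw [hsplit]
      rw [Multiset.range_add, Multiset.map_add, Multiset.map_map]
      congr 1
      · have : (Multiset.range 1) = ({0} : Multiset ℕ) := rfl
        rw [this]
        simp
      · apply Multiset.map_congr rfl
        intro y _
        simp only [Function.comp_apply]
        push_cast
        ring
    have key2 : (Multiset.range (kk + 1)).map (fun x : ℕ => χ j + (x : ℚ))
        + (Multiset.range (n - 1 - kk)).map (fun y : ℕ => χ j - ((y : ℚ) + 1))
        = (Multiset.range n).map (fun t : ℕ => χ i - (t : ℚ)) := by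
      have hsplit : n = (kk + 1) + (n - 1 - kk) := by omega
      conv_rhs => rw [hsplit, Multiset.range_add]
      rw [Multiset.map_add, Multiset.map_map]
      congr 1
      · rw [map_range_reflect (fun x : ℕ => χ j + (x : ℚ)) (kk + 1)]
        apply Multiset.map_congr rfl
        intro t ht
        rw [Multiset.mem_range] at ht
        have ht' : t ≤ kk := by omega
        have h1 : kk + 1 - 1 - t = kk - t := by omega
        rw [h1, Nat.cast_sub ht']
        rw [hkeq]
        ring
      · apply Multiset.map_congr rfl
        intro y _
        simp only [Function.comp_apply]
        push_cast
        rw [hkeq]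
        ring
    rw [key1, key2]
  · intro heq
    have h00 : ((0 : ℕ), (0 : ℕ)) ∈ (hookYD 0 (n - 1)).cells := by
      rw [hookYD_cells]
      simp
    have := congrFun heq i
    rw [if_pos rfl, if_neg hij] at this
    rw [this] at h00
    rw [YoungDiagram.cells_bot] at h00
    exact absurd h00 (Finset.notMem_empty _)

lemma not_generic_counterexample {n r : ℕ} {χ : Fin r → ℚ} (h : ¬ generic n χ) :
    ∃ Λ M : Fin r → YoungDiagram, isMP n Λ ∧ isMP n M ∧
      contMultiset χ Λ = contMultiset χ M ∧ Λ ≠ M := by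
  rw [generic] at h
  push_neg at h
  obtain ⟨i, j, hij, k, hkn, hkeq⟩ := h
  rcases le_or_gt 0 k with hk | hk
  · refine hook_counterexample i j hij k.toNat (by omega) ?_
    have : ((k.toNat : ℤ) : ℚ) = (k : ℚ) := by
      congr 1
      omega
    rw [← this] at hkeq
    push_cast at hkeq ⊢
    linarith
  · refine hook_counterexample j i hij.symm (-k).toNat (by omega) ?_
    have : (((-k).toNat : ℤ) : ℚ) = ((-k : ℤ) : ℚ) := by
      congr 1
      omega
    push_cast at this hkeq ⊢
    linarith

end Aux

/-- ≥_χ is antisymmetric iff χ is generic, equivalently iff multisets of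
shifted contents determine multipartitions uniquely. -/
theorem antisymm_iff_generic (n r : ℕ) (χ : Fin r → ℚ) :
    ((∀ Λ M : Fin r → YoungDiagram, isMP n Λ → isMP n M →
        contGE χ Λ M → contGE χ M Λ → Λ = M) ↔ generic n χ) ∧
    ((∀ Λ M : Fin r → YoungDiagram, isMP n Λ → isMP n M →
        contGE χ Λ M → contGE χ M Λ → Λ = M) ↔
      (∀ Λ M : Fin r → YoungDiagram, isMP n Λ → isMP n M →
        contMultiset χ Λ = contMultiset χ M → Λ = M)) := by
  constructor
  · constructor
    · intro hP
      by_contra hng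
      obtain ⟨Λ, M, hΛ, hM, hcm, hne⟩ := not_generic_counterexample hng
      exact hne (hP Λ M hΛ hM (contGE_of_eq χ hcm) (contGE_of_eq χ hcm.symm))
    · intro hg Λ M hΛ hM h1 h2
      exact generic_inj hg hΛ hM (eq_of_contGE χ h1 h2)
  · constructor
    · intro hP Λ M hΛ hM hcm
      exact hP Λ M hΛ hM (contGE_of_eq χ hcm) (contGE_of_eq χ hcm.symm)
    · intro hQ Λ M hΛ hM h1 h2
      exact hQ Λ M hΛ hM (eq_of_contGE χ h1 h2)
end

section
/- If χ ∈ ℚ^r is generic, then two distinct r-multipartitions of n have different multisets of shifted contents. -/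
open Finset

namespace GenericAux

/-- Remove the first row of a Young diagram (shifting remaining rows up). -/
def ydTail (μ : YoungDiagram) : YoungDiagram where
  cells := (μ.cells.filter fun c => c.1 ≠ 0).image fun c => (c.1 - 1, c.2)
  isLowerSet := by
    rintro ⟨y1, x1⟩ ⟨y2, x2⟩ hle h
    simp only [Finset.coe_image, Finset.coe_filter, Set.mem_image, Set.mem_setOf_eq,
      Finset.mem_coe, YoungDiagram.mem_cells] at h ⊢
    obtain ⟨⟨y, x⟩, ⟨hmem, hy0⟩, heq⟩ := h
    simp only [Prod.mk.injEq] at heq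
    obtain ⟨hy, hx⟩ := hle
    simp only at hy hx hy0
    refine ⟨(y2 + 1, x2), ⟨?_, by simp⟩, by simp⟩
    exact μ.up_left_mem (by omega) (by omega) hmem

lemma mem_ydTail (μ : YoungDiagram) (y x : ℕ) : (y, x) ∈ ydTail μ ↔ (y + 1, x) ∈ μ := by
  constructor
  · intro h
    have h' : (y, x) ∈ (μ.cells.filter fun c => c.1 ≠ 0).image fun c => (c.1 - 1, c.2) := h
    simp only [Finset.mem_image, Finset.mem_filter, YoungDiagram.mem_cells] at h'
    obtain ⟨⟨a, b⟩, ⟨hm, ha⟩, he⟩ := h'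
    simp only [Prod.mk.injEq] at he
    simp only at ha
    have : a = y + 1 := by omega
    subst this
    rwa [he.2] at hm
  · intro h
    show (y, x) ∈ (μ.cells.filter fun c => c.1 ≠ 0).image fun c => (c.1 - 1, c.2)
    exact Finset.mem_image.mpr ⟨(y + 1, x), Finset.mem_filter.mpr ⟨h, by simp⟩, by simp⟩

lemma cells_val_map_split {β : Type*} (μ : YoungDiagram) (f : ℕ × ℕ → β) :
    μ.cells.val.map f =
      (Multiset.range (μ.rowLen 0)).map (fun x => f (0, x)) +
      (ydTail μ).cells.val.map (fun c => f (c.1 + 1, c.2)) := by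
  classical
  have h0 : μ.cells.val =
      (μ.cells.filter fun c => c.1 = 0).val + (μ.cells.filter fun c => ¬ c.1 = 0).val := by
    simp only [Finset.filter_val]
    exact (Multiset.filter_add_not _ _).symm
  rw [h0, Multiset.map_add]
  congr 1
  · have hrow : (μ.cells.filter fun c => c.1 = 0) =
        (Finset.range (μ.rowLen 0)).image fun x => ((0 : ℕ), x) := by
      ext ⟨y, x⟩
      simp only [Finset.mem_filter, YoungDiagram.mem_cells, Finset.mem_image, Finset.mem_range,
        Prod.mk.injEq]
      constructor
      · rintro ⟨hm, rfl⟩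
        exact ⟨x, YoungDiagram.mem_iff_lt_rowLen.mp hm, rfl, rfl⟩
      · rintro ⟨a, ha, rfl, rfl⟩
        exact ⟨YoungDiagram.mem_iff_lt_rowLen.mpr ha, rfl⟩
    rw [hrow, Finset.image_val_of_injOn (by intro a _ b _ h; simpa using h)]
    rw [← Finset.range_val, Multiset.map_map]
    rfl
  · have htail : (ydTail μ).cells.val =
        (μ.cells.filter fun c => ¬ c.1 = 0).val.map fun c => (c.1 - 1, c.2) := by
      show ((μ.cells.filter fun c => c.1 ≠ 0).image fun c => (c.1 - 1, c.2)).val = _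
      rw [Finset.image_val_of_injOn]
      intro ⟨a, b⟩ ha ⟨a', b'⟩ ha' h
      simp only [Finset.coe_filter, Set.mem_setOf_eq] at ha ha'
      simp only [Prod.mk.injEq] at h ⊢
      exact ⟨by omega, h.2⟩
    rw [htail, Multiset.map_map]
    apply Multiset.map_congr rfl
    intro ⟨a, b⟩ hab
    simp only [Finset.filter_val, Multiset.mem_filter] at hab
    simp only [Function.comp_apply]
    congr 2
    omega

lemma card_split (μ : YoungDiagram) : μ.card = μ.rowLen 0 + (ydTail μ).card := by
  have h := congrArg Multiset.card (cells_val_map_split μ id)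
  rw [Multiset.card_map, Multiset.card_add, Multiset.card_map, Multiset.card_map,
    Multiset.card_range] at h
  exact h

lemma eq_of_tail_eq {μ ν : YoungDiagram} (h0 : μ.rowLen 0 = ν.rowLen 0)
    (ht : ydTail μ = ydTail ν) : μ = ν := by
  ext1
  ext ⟨y, x⟩
  show (y, x) ∈ μ ↔ (y, x) ∈ ν
  match y with
  | 0 => rw [YoungDiagram.mem_iff_lt_rowLen, YoungDiagram.mem_iff_lt_rowLen, h0]
  | y + 1 => rw [← mem_ydTail, ← mem_ydTail, ht]

lemma rowLen_le_card (μ : YoungDiagram) : μ.rowLen 0 ≤ μ.card := by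
  rw [YoungDiagram.rowLen_eq_card]
  exact Finset.card_le_card (by rw [YoungDiagram.row]; exact Finset.filter_subset _ _)

lemma join_eq_sum {α : Type*} (S : Multiset (Multiset α)) : S.join = S.sum := by
  induction S using Multiset.induction with
  | empty => simp
  | cons a s ih => simp [Multiset.join_cons, ih]

lemma bind_eq_sum {α β : Type*} (s : Finset α) (g : α → Multiset β) :
    s.val.bind g = ∑ i ∈ s, g i := by
  show (s.val.map g).join = _
  rw [join_eq_sum]
  rfl

lemma contMultiset_eq_sum {r : ℕ} (χ : Fin r → ℚ) (Λ : Fin r → YoungDiagram) :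
    contMultiset χ Λ = ∑ i, (Λ i).cells.val.map fun c => χ i + (c.2 : ℚ) - (c.1 : ℚ) := by
  classical
  have hd : ((Finset.univ : Finset (Fin r)) : Set (Fin r)).PairwiseDisjoint
      fun i => (Λ i).cells.image fun c => (i, c) := by
    intro i _ j _ hij
    simp only [Function.onFun, Finset.disjoint_left]
    rintro _ ha hb
    simp only [Finset.mem_image] at ha hb
    obtain ⟨c, _, rfl⟩ := ha
    obtain ⟨c', _, h⟩ := hb
    exact hij (congrArg Prod.fst h).symm
  rw [contMultiset, mbBoxes, ← Finset.disjiUnion_eq_biUnion _ _ hd, Finset.disjiUnion_val,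
    Multiset.map_bind, bind_eq_sum]
  refine Finset.sum_congr rfl fun i _ => ?_
  rw [Finset.image_val_of_injOn (by intro a _ b _ h; simpa [Prod.ext_iff] using h),
    Multiset.map_map]
  rfl

lemma mem_contMultiset {r : ℕ} (χ : Fin r → ℚ) (Λ : Fin r → YoungDiagram) {i : Fin r}
    {c : ℕ × ℕ} (hc : c ∈ (Λ i).cells) : χ i + (c.2 : ℚ) - (c.1 : ℚ) ∈ contMultiset χ Λ := by
  have hb : (i, c) ∈ mbBoxes Λ :=
    Finset.mem_biUnion.mpr ⟨i, Finset.mem_univ i, Finset.mem_image_of_mem _ hc⟩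
  exact Multiset.mem_map.mpr ⟨(i, c), hb, rfl⟩

end GenericAux

namespace GenericAux

lemma contMultiset_update {r : ℕ} (χ : Fin r → ℚ) (Λ : Fin r → YoungDiagram) (i : Fin r) :
    contMultiset χ Λ =
      (Multiset.range ((Λ i).rowLen 0)).map (fun x : ℕ => χ i + (x : ℚ)) +
      contMultiset (Function.update χ i (χ i - 1)) (Function.update Λ i (ydTail (Λ i))) := by
  classical
  rw [contMultiset_eq_sum, contMultiset_eq_sum]
  rw [← Finset.add_sum_erase _ _ (Finset.mem_univ i), ← Finset.add_sum_erase _ _ (Finset.mem_univ i)]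
  have hrest : ∀ j ∈ Finset.univ.erase i,
      ((Function.update Λ i (ydTail (Λ i)) j).cells.val.map
        fun c => Function.update χ i (χ i - 1) j + (c.2 : ℚ) - (c.1 : ℚ)) =
      ((Λ j).cells.val.map fun c => χ j + (c.2 : ℚ) - (c.1 : ℚ)) := by
    intro j hj
    have hji : j ≠ i := (Finset.mem_erase.mp hj).1
    rw [Function.update_of_ne hji, Function.update_of_ne hji]
  rw [Finset.sum_congr rfl hrest]
  rw [Function.update_self, Function.update_self]
  rw [cells_val_map_split (Λ i) (fun c => χ i + (c.2 : ℚ) - (c.1 : ℚ))]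
  rw [add_assoc]
  congr 1
  · apply Multiset.map_congr rfl
    intro x _
    push_cast
    ring
  · congr 1
    apply Multiset.map_congr rfl
    intro c _
    push_cast
    ring

lemma generic_ne {n r : ℕ} {χ : Fin r → ℚ} (h : generic n χ) {i j : Fin r} (hij : i ≠ j)
    {a b : ℕ} (ha : a < n) (hb : b < n) : χ i + (a : ℚ) ≠ χ j + (b : ℚ) := by
  intro he
  have hk : χ i - χ j = (((b : ℤ) - (a : ℤ) : ℤ) : ℚ) := by push_cast; linarith
  exact h i j hij ((b : ℤ) - (a : ℤ)) (by omega) hk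

lemma exists_top {r n : ℕ} (χ : Fin r → ℚ) (Λ : Fin r → YoungDiagram) (hΛ : isMP n Λ)
    {v : ℚ} (hv : v ∈ contMultiset χ Λ) (hmax : ∀ w ∈ contMultiset χ Λ, w ≤ v) :
    ∃ i : Fin r, 1 ≤ (Λ i).rowLen 0 ∧ (Λ i).rowLen 0 ≤ n ∧
      v = χ i + (((Λ i).rowLen 0 - 1 : ℕ) : ℚ) := by
  obtain ⟨b, hb, hbv⟩ := Multiset.mem_map.mp hv
  have hb' : b ∈ mbBoxes Λ := hb
  obtain ⟨i, -, hbi⟩ := Finset.mem_biUnion.mp hb'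
  obtain ⟨⟨y, x⟩, hc, rfl⟩ := Finset.mem_image.mp hbi
  have hyx : (y, x) ∈ Λ i := hc
  set ℓ := (Λ i).rowLen 0 with hℓ
  have h00 : (0, 0) ∈ Λ i := (Λ i).up_left_mem (Nat.zero_le _) (Nat.zero_le _) hyx
  have hℓ1 : 1 ≤ ℓ := YoungDiagram.mem_iff_lt_rowLen.mp h00
  have htopmem : (0, ℓ - 1) ∈ Λ i := YoungDiagram.mem_iff_lt_rowLen.mpr (by omega)
  have hwmem : χ i + ((ℓ - 1 : ℕ) : ℚ) - ((0 : ℕ) : ℚ) ∈ contMultiset χ Λ :=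
    mem_contMultiset χ Λ ((YoungDiagram.mem_cells _).mpr htopmem)
  have hle1 : χ i + ((ℓ - 1 : ℕ) : ℚ) - ((0 : ℕ) : ℚ) ≤ v := hmax _ hwmem
  have hxl : x ≤ ℓ - 1 := by
    have h1 : x < (Λ i).rowLen y := YoungDiagram.mem_iff_lt_rowLen.mp hyx
    have h2 : (Λ i).rowLen y ≤ ℓ := (Λ i).rowLen_anti 0 y (Nat.zero_le _)
    omega
  have hle2 : v ≤ χ i + ((ℓ - 1 : ℕ) : ℚ) := by
    rw [← hbv]
    show χ i + (x : ℚ) - (y : ℚ) ≤ _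
    have : (x : ℚ) ≤ ((ℓ - 1 : ℕ) : ℚ) := Nat.cast_le.mpr hxl
    have hy0 : (0 : ℚ) ≤ (y : ℚ) := Nat.cast_nonneg y
    linarith
  have hcard : (Λ i).card ≤ n := by
    rw [← hΛ]
    exact Finset.single_le_sum (f := fun j => (Λ j).card) (fun j _ => Nat.zero_le _) (Finset.mem_univ i)
  refine ⟨i, hℓ1, le_trans (rowLen_le_card (Λ i)) hcard, ?_⟩
  have : χ i + ((ℓ - 1 : ℕ) : ℚ) - ((0 : ℕ) : ℚ) = χ i + ((ℓ - 1 : ℕ) : ℚ) := by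
    push_cast; ring
  rw [this] at hle1
  linarith

lemma card_eq_bot {μ : YoungDiagram} (h : μ.card = 0) : μ = ⊥ := by
  ext1
  rw [Finset.card_eq_zero.mp h, YoungDiagram.cells_bot]

end GenericAux

namespace GenericAux

theorem main (n : ℕ) : ∀ (r : ℕ) (χ : Fin r → ℚ), generic n χ →
    ∀ Λ M : Fin r → YoungDiagram, isMP n Λ → isMP n M →
      contMultiset χ Λ = contMultiset χ M → Λ = M := by
  induction n using Nat.strong_induction_on with
  | _ n IH =>
  intro r χ hgen Λ M hΛ hM hC
  unfold isMP at hΛ hM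
  rcases Nat.eq_zero_or_pos n with hn | hn
  · subst hn
    funext j
    have h1 : (Λ j).card = 0 := by
      have h : (Λ j).card ≤ ∑ k, (Λ k).card := Finset.single_le_sum
        (f := fun k => (Λ k).card) (fun k _ => Nat.zero_le ((Λ k).card)) (Finset.mem_univ j)
      omega
    have h2 : (M j).card = 0 := by
      have h : (M j).card ≤ ∑ k, (M k).card := Finset.single_le_sum
        (f := fun k => (M k).card) (fun k _ => Nat.zero_le ((M k).card)) (Finset.mem_univ j)
      omega
    rw [card_eq_bot h1, card_eq_bot h2]
  · have hne : ∃ c : ℚ, c ∈ contMultiset χ Λ := by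
      by_contra h
      push_neg at h
      have hz : ∀ j, (Λ j).card = 0 := by
        intro j
        by_contra hj
        obtain ⟨c, hc⟩ := Finset.card_ne_zero.mp hj
        exact h _ (mem_contMultiset χ Λ hc)
      have hzz : ∑ k, (Λ k).card = 0 := Finset.sum_eq_zero fun k _ => hz k
      omega
    obtain ⟨c0, hc0⟩ := hne
    have hSne : (contMultiset χ Λ).toFinset.Nonempty := ⟨c0, Multiset.mem_toFinset.mpr hc0⟩
    obtain ⟨v, hvmem, hvtop⟩ : ∃ v, v ∈ (contMultiset χ Λ).toFinset ∧
        ∀ w ∈ (contMultiset χ Λ).toFinset, w ≤ v :=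
      ⟨(contMultiset χ Λ).toFinset.max' hSne, (contMultiset χ Λ).toFinset.max'_mem hSne,
        fun w hw => (contMultiset χ Λ).toFinset.le_max' w hw⟩
    have hvS : v ∈ contMultiset χ Λ := Multiset.mem_toFinset.mp hvmem
    have hmax : ∀ w ∈ contMultiset χ Λ, w ≤ v :=
      fun w hw => hvtop w (Multiset.mem_toFinset.mpr hw)
    obtain ⟨i, hi1, hin, hvi⟩ := exists_top χ Λ hΛ hvS hmax
    have hvS' : v ∈ contMultiset χ M := hC ▸ hvS
    have hmax' : ∀ w ∈ contMultiset χ M, w ≤ v := by rw [← hC]; exact hmax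
    obtain ⟨j, hj1, hjn, hvj⟩ := exists_top χ M hM hvS' hmax'
    have hij : i = j := by
      by_contra hne'
      exact generic_ne hgen hne' (by omega) (by omega) (hvi.symm.trans hvj)
    subst hij
    have hll : (Λ i).rowLen 0 = (M i).rowLen 0 := by
      have h := hvi.symm.trans hvj
      have h2 : (((Λ i).rowLen 0 - 1 : ℕ) : ℚ) = (((M i).rowLen 0 - 1 : ℕ) : ℚ) := by linarith
      have h3 : (Λ i).rowLen 0 - 1 = (M i).rowLen 0 - 1 := Nat.cast_injective h2
      omega
    set ℓ := (Λ i).rowLen 0 with hℓdef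
    set χ' := Function.update χ i (χ i - 1) with hχ'def
    set Λ' := Function.update Λ i (ydTail (Λ i)) with hΛ'def
    set M' := Function.update M i (ydTail (M i)) with hM'def
    have hCu : contMultiset χ' Λ' = contMultiset χ' M' := by
      have e1 := contMultiset_update χ Λ i
      have e2 := contMultiset_update χ M i
      rw [e1, e2, ← hll] at hC
      exact add_left_cancel hC
    have hcardΛ : (Λ i).card = ℓ + (ydTail (Λ i)).card := card_split (Λ i)
    have hcardM : (M i).card = ℓ + (ydTail (M i)).card := by
      rw [card_split (M i), hll]
    have hsumΛ : (Λ i).card + ∑ k ∈ Finset.univ.erase i, (Λ k).card = n := by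
      rw [Finset.add_sum_erase Finset.univ (fun k => (Λ k).card) (Finset.mem_univ i)]; exact hΛ
    have hsumM : (M i).card + ∑ k ∈ Finset.univ.erase i, (M k).card = n := by
      rw [Finset.add_sum_erase Finset.univ (fun k => (M k).card) (Finset.mem_univ i)]; exact hM
    have hupdsum : ∀ (N : Fin r → YoungDiagram) (ν : YoungDiagram),
        ∑ k, (Function.update N i ν k).card =
          ν.card + ∑ k ∈ Finset.univ.erase i, (N k).card := by
      intro N ν
      rw [← Finset.add_sum_erase Finset.univ (fun k => (Function.update N i ν k).card)
        (Finset.mem_univ i), Function.update_self]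
      congr 1
      refine Finset.sum_congr rfl fun k hk => ?_
      rw [Function.update_of_ne (Finset.mem_erase.mp hk).1]
    have hΛ' : isMP (n - ℓ) Λ' := by
      show ∑ k, (Λ' k).card = n - ℓ
      rw [hΛ'def, hupdsum]
      omega
    have hM' : isMP (n - ℓ) M' := by
      show ∑ k, (M' k).card = n - ℓ
      rw [hM'def, hupdsum]
      omega
    have hgen' : generic (n - ℓ) χ' := by
      intro a b hab k hk he
      by_cases ha : a = i
      · by_cases hb2 : b = i
        · exact hab (ha.trans hb2.symm)
        · have hib : i ≠ b := by rw [← ha]; exact hab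
          rw [hχ'def, ha, Function.update_self, Function.update_of_ne hb2] at he
          exact hgen i b hib (k + 1) (by omega) (by push_cast; push_cast at he; linarith)
      · by_cases hb2 : b = i
        · have hai : a ≠ i := by rw [← hb2]; exact hab
          rw [hχ'def, hb2, Function.update_self, Function.update_of_ne ha] at he
          exact hgen a i hai (k - 1) (by omega) (by push_cast; push_cast at he; linarith)
        · rw [hχ'def, Function.update_of_ne ha, Function.update_of_ne hb2] at he
          exact hgen a b hab k (by omega) he
    have heq := IH (n - ℓ) (by omega) r χ' hgen' Λ' M' hΛ' hM' hCu
    funext k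
    by_cases hk : k = i
    · subst hk
      have h := congrFun heq k
      rw [hΛ'def, hM'def, Function.update_self, Function.update_self] at h
      exact eq_of_tail_eq hll h
    · have h := congrFun heq k
      rwa [hΛ'def, hM'def, Function.update_of_ne hk, Function.update_of_ne hk] at h

end GenericAux

/-- for generic χ, distinct multipartitions of n have distinct
multisets of shifted contents. -/
theorem generic_contMultiset_inj (n r : ℕ) (χ : Fin r → ℚ) (hgen : generic n χ)
    (Λ M : Fin r → YoungDiagram) (hΛ : isMP n Λ) (hM : isMP n M) (hne : Λ ≠ M) :
    contMultiset χ Λ ≠ contMultiset χ M := by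
  intro h
  exact hne (GenericAux.main n r χ hgen Λ M hΛ hM h)
end

section
/- If r-multipartitions Λ and M of n are adjacent (i.e., the skew shapes Λ∖M and M∖Λ are each contained in a single component, are each skew Young diagrams, and are translates of each other up to choice of component), then for generic χ either Λ ≥_χ M or M ≥_χ Λ, and the difference Cont_χ(b) − Cont_χ(b') is the same nonzero constant d for every moved box b ∈ Λ∖M and its corresponding box b' ∈ M∖Λ. -/
open Finset

lemma mem_mbBoxes {r : ℕ} (Λ : Fin r → YoungDiagram) (b : Fin r × ℕ × ℕ) :
    b ∈ mbBoxes Λ ↔ b.2 ∈ (Λ b.1).cells := by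
  obtain ⟨i, c⟩ := b
  simp only [mbBoxes, Finset.mem_biUnion, Finset.mem_univ, true_and, Finset.mem_image]
  constructor
  · rintro ⟨j, d, hd, h⟩; cases h; exact hd
  · intro h; exact ⟨i, c, h, rfl⟩

lemma card_mbBoxes {r : ℕ} (Λ : Fin r → YoungDiagram) :
    (mbBoxes Λ).card = ∑ i, (Λ i).card := by
  rw [mbBoxes, Finset.card_biUnion]
  · refine Finset.sum_congr rfl fun i _ => ?_
    rw [Finset.card_image_of_injective _ (fun a b h => by simpa using h)]
  · intro i _ j _ hij
    simp only [Finset.disjoint_left, Finset.mem_image]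
    rintro a ⟨c, _, rfl⟩ ⟨d, _, h⟩
    exact hij (congrArg Prod.fst h).symm

lemma hook_le_card (μ : YoungDiagram) {y x : ℕ} (h : (y, x) ∈ μ) :
    y + x + 1 ≤ μ.card := by
  have := Finset.card_le_card_of_injOn
    (f := fun k => if k ≤ y then (k, 0) else (y, k - y)) (s := Finset.range (y + x + 1))
    (t := μ.cells) ?_ ?_
  · simpa using this
  · intro k hk
    simp only [Finset.mem_coe, Finset.mem_range] at hk
    by_cases hky : k ≤ y <;> simp only [hky, if_true, if_false, Finset.mem_coe, YoungDiagram.mem_cells]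
    · exact μ.up_left_mem hky (Nat.zero_le _) h
    · exact μ.up_left_mem le_rfl (by omega) h
  · intro a _ b _ hab
    by_cases ha : a ≤ y <;> by_cases hb : b ≤ y <;>
      simp only [ha, hb, if_true, if_false, Prod.mk.injEq] at hab <;> omega

lemma rowLen_le_card (μ : YoungDiagram) (y : ℕ) : μ.rowLen y ≤ μ.card := by
  rw [YoungDiagram.rowLen_eq_card]
  exact Finset.card_le_card (fun c hc => (YoungDiagram.mem_row_iff.mp hc).1)

lemma colLen_le_card (μ : YoungDiagram) (x : ℕ) : μ.colLen x ≤ μ.card := by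
  rw [YoungDiagram.colLen_eq_card]
  exact Finset.card_le_card (fun c hc => (YoungDiagram.mem_col_iff.mp hc).1)

lemma contGE_of_maps {r : ℕ} (χ : Fin r → ℚ) (Λ M : Fin r → YoungDiagram)
    (f : Fin r × ℕ × ℕ → Fin r × ℕ × ℕ)
    (hcard : (mbBoxes Λ).card = (mbBoxes M).card)
    (hmaps : ∀ b ∈ mbBoxes Λ, f b ∈ mbBoxes M)
    (hinj : ∀ a ∈ mbBoxes Λ, ∀ b ∈ mbBoxes Λ, f a = f b → a = b) :
    ((∀ b ∈ mbBoxes Λ, cont χ b ≥ cont χ (f b)) → contGE χ Λ M) ∧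
    ((∀ b ∈ mbBoxes Λ, cont χ (f b) ≥ cont χ b) → contGE χ M Λ) := by
  classical
  set F : ↥(mbBoxes Λ) → ↥(mbBoxes M) := fun b => ⟨f b.1, hmaps _ b.2⟩ with hF
  have hFinj : Function.Injective F := fun a b h =>
    Subtype.ext (hinj _ a.2 _ b.2 (congrArg Subtype.val h))
  have hbij : Function.Bijective F :=
    (Fintype.bijective_iff_injective_and_card F).mpr
      ⟨hFinj, by simp [Fintype.card_coe, hcard]⟩
  set e := Equiv.ofBijective F hbij with he
  have hev : ∀ b : ↥(mbBoxes Λ), (e b : Fin r × ℕ × ℕ) = f (b : Fin r × ℕ × ℕ) := fun b => rfl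
  constructor
  · intro h
    exact ⟨e, fun b => by rw [hev]; exact h _ b.2⟩
  · intro h
    refine ⟨e.symm, fun c => ?_⟩
    have h2 := h _ (e.symm c).2
    calc cont χ (c : Fin r × ℕ × ℕ) = cont χ ((e (e.symm c) : Fin r × ℕ × ℕ)) := by
          rw [Equiv.apply_symm_apply]
      _ = cont χ (f ((e.symm c : Fin r × ℕ × ℕ))) := by rw [hev]
      _ ≥ cont χ ((e.symm c : Fin r × ℕ × ℕ)) := h2

/-- adjacent multipartitions are comparable for generic χ, and the
difference of shifted contents of corresponding moved boxes is a nonzero constant. -/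
theorem adjacent_comparable (n r : ℕ) (χ : Fin r → ℚ) (hgen : generic n χ)
    (Λ M : Fin r → YoungDiagram) (hΛ : isMP n Λ) (hM : isMP n M)
    (l m : Fin r) (dy dx : ℤ) (hadj : adjWitness Λ M l m dy dx) :
    (contGE χ Λ M ∨ contGE χ M Λ) ∧
    ∃ d : ℚ, d ≠ 0 ∧
      ∀ y x y' x' : ℕ, (y, x) ∈ (Λ l).cells → (y, x) ∉ (M l).cells →
        (y' : ℤ) = (y : ℤ) + dy → (x' : ℤ) = (x : ℤ) + dx →
        cont χ (l, (y, x)) - cont χ (m, (y', x')) = d := by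
  classical
  obtain ⟨h1, h2, h3⟩ := hadj
  have hmv : ∀ y x : ℕ, (y, x) ∈ (Λ l).cells → (y, x) ∉ (M l).cells →
      ∃ y' x' : ℕ, (y' : ℤ) = (y : ℤ) + dy ∧ (x' : ℤ) = (x : ℤ) + dx ∧
        (y', x') ∈ (M m).cells ∧ (y', x') ∉ (Λ m).cells := by
    intro y x hy hy'
    obtain ⟨y', x', ⟨ha, hb⟩, e1, e2⟩ := (h3 y x).mp ⟨hy, hy'⟩
    exact ⟨y', x', e1, e2, ha, hb⟩
  by_cases hne : ∃ y x : ℕ, (y, x) ∈ (Λ l).cells ∧ (y, x) ∉ (M l).cells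
  case neg =>
    push_neg at hne
    have hsub : ∀ i, (Λ i).cells ⊆ (M i).cells := by
      intro i c hc
      by_cases hil : i = l
      · subst hil; obtain ⟨y, x⟩ := c; exact hne y x hc
      · exact h1 i hil c hc
    have hLM : ∀ i, i ≠ m → Λ i = M i := by
      intro i him
      ext c
      exact ⟨fun hc => hsub i hc, fun hc => h2 i him c hc⟩
    have hcardm : (Λ m).card = (M m).card := by
      have e1 : ∀ i ∈ Finset.univ.erase m, (Λ i).card = (M i).card := fun i hi => by
        rw [hLM i (Finset.ne_of_mem_erase hi)]
      have h6 := Finset.sum_congr rfl e1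
      unfold isMP at hΛ hM
      rw [← Finset.sum_erase_add Finset.univ _ (Finset.mem_univ m)] at hΛ hM
      omega
    have hmm : Λ m = M m := by
      ext c
      rw [Finset.eq_of_subset_of_card_le (hsub m) (le_of_eq hcardm.symm)]
    have hΛM : Λ = M := funext fun i => by
      by_cases h : i = m
      · subst h; exact hmm
      · exact hLM i h
    subst hΛM
    refine ⟨Or.inl ⟨Equiv.refl _, fun b => le_refl _⟩, 1, one_ne_zero, ?_⟩
    intro y x y' x' hmem hnot _ _
    exact absurd hmem hnot
  case pos =>
    obtain ⟨y0, x0, hy0, hy0'⟩ := hne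
    set d : ℚ := χ l - χ m + ((dy : ℚ) - (dx : ℚ)) with hd
    have hdval : ∀ y x y' x' : ℕ, (y, x) ∈ (Λ l).cells → (y, x) ∉ (M l).cells →
        (y' : ℤ) = (y : ℤ) + dy → (x' : ℤ) = (x : ℤ) + dx →
        cont χ (l, (y, x)) - cont χ (m, (y', x')) = d := by
      intro y x y' x' _ _ e1 e2
      have e1' : (y' : ℚ) = (y : ℚ) + (dy : ℚ) := by exact_mod_cast e1
      have e2' : (x' : ℚ) = (x : ℚ) + (dx : ℚ) := by exact_mod_cast e2
      simp only [cont, hd]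
      rw [e1', e2']; ring
    -- leftmost moved box in row y0
    set xK := (M l).rowLen y0 with hxK
    have hKle : xK ≤ x0 := by
      by_contra hlt
      push_neg at hlt
      exact hy0' ((YoungDiagram.mem_cells _).mpr (YoungDiagram.mem_iff_lt_rowLen.mpr hlt))
    have hKmem : (y0, xK) ∈ (Λ l).cells := by
      rw [YoungDiagram.mem_cells] at hy0 ⊢
      exact (Λ l).up_left_mem le_rfl hKle hy0
    have hKnot : (y0, xK) ∉ (M l).cells := by
      rw [YoungDiagram.mem_cells, YoungDiagram.mem_iff_lt_rowLen, ← hxK]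
      omega
    obtain ⟨yA, xA, eA1, eA2, hA, hA'⟩ := hmv y0 xK hKmem hKnot
    -- topmost moved box in column x0
    set yK := (M l).colLen x0 with hyK
    have hKle2 : yK ≤ y0 := by
      by_contra hlt
      push_neg at hlt
      exact hy0' ((YoungDiagram.mem_cells _).mpr (YoungDiagram.mem_iff_lt_colLen.mpr hlt))
    have hKmem2 : (yK, x0) ∈ (Λ l).cells := by
      rw [YoungDiagram.mem_cells] at hy0 ⊢
      exact (Λ l).up_left_mem hKle2 le_rfl hy0
    have hKnot2 : (yK, x0) ∉ (M l).cells := by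
      rw [YoungDiagram.mem_cells, YoungDiagram.mem_iff_lt_colLen, ← hyK]
      omega
    obtain ⟨yB, xB, eB1, eB2, hB, hB'⟩ := hmv yK x0 hKmem2 hKnot2
    have hdne : d ≠ 0 := by
      by_cases hlm : l = m
      · subst hlm
        intro hd0
        have hDq : (dy : ℚ) - (dx : ℚ) = 0 := by rw [hd] at hd0; linarith
        have hD : dy = dx := by
          have : (dy : ℚ) = (dx : ℚ) := by linarith
          exact_mod_cast this
        rcases le_or_gt 0 dy with ht | ht
        · exact hKnot ((YoungDiagram.mem_cells _).mpr
            ((M l).up_left_mem (by omega) (by omega) ((YoungDiagram.mem_cells _).mp hA)))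
        · exact hA' ((YoungDiagram.mem_cells _).mpr
            ((Λ l).up_left_mem (by omega) (by omega) ((YoungDiagram.mem_cells _).mp hKmem)))
      · have hcardsum : (M l).card + (M m).card ≤ n := by
          have h5 : (M m).card ≤ ∑ i ∈ Finset.univ.erase l, (M i).card :=
            Finset.single_le_sum (f := fun i => (M i).card) (fun _ _ => Nat.zero_le _)
              (Finset.mem_erase.mpr ⟨Ne.symm hlm, Finset.mem_univ m⟩)
          unfold isMP at hM
          rw [← Finset.sum_erase_add Finset.univ _ (Finset.mem_univ l)] at hM
          omega
        have hhookA : yA + xA + 1 ≤ (M m).card := hook_le_card _ ((YoungDiagram.mem_cells _).mp hA)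
        have hhookB : yB + xB + 1 ≤ (M m).card := hook_le_card _ ((YoungDiagram.mem_cells _).mp hB)
        have hrl : xK ≤ (M l).card := hxK ▸ rowLen_le_card (M l) y0
        have hcl : yK ≤ (M l).card := hyK ▸ colLen_le_card (M l) x0
        have hub : (dy - dx).natAbs < n := by omega
        intro hd0
        have hc : χ l - χ m = ((-(dy - dx) : ℤ) : ℚ) := by
          rw [hd] at hd0
          push_cast
          linarith
        exact hgen l m hlm (-(dy - dx)) (by rw [Int.natAbs_neg]; exact hub) hc
    refine ⟨?_, d, hdne, hdval⟩
    set f : Fin r × ℕ × ℕ → Fin r × ℕ × ℕ := fun b =>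
      if b.1 = l ∧ b.2 ∈ (Λ l).cells ∧ b.2 ∉ (M l).cells
      then (m, ((b.2.1 : ℤ) + dy).toNat, ((b.2.2 : ℤ) + dx).toNat) else b with hf
    have hfmove : ∀ y x : ℕ, (y, x) ∈ (Λ l).cells → (y, x) ∉ (M l).cells →
        ∃ y' x' : ℕ, f (l, y, x) = (m, y', x') ∧ (y' : ℤ) = (y : ℤ) + dy ∧
          (x' : ℤ) = (x : ℤ) + dx ∧ (y', x') ∈ (M m).cells ∧ (y', x') ∉ (Λ m).cells := by
      intro y x hy hy'
      obtain ⟨y', x', e1, e2, ha, hb⟩ := hmv y x hy hy'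
      refine ⟨y', x', ?_, e1, e2, ha, hb⟩
      simp only [hf]
      rw [if_pos ⟨trivial, hy, hy'⟩]
      have t1 : ((y : ℤ) + dy).toNat = y' := by omega
      have t2 : ((x : ℤ) + dx).toNat = x' := by omega
      rw [t1, t2]
    have hfunmoved : ∀ b, ¬(b.1 = l ∧ b.2 ∈ (Λ l).cells ∧ b.2 ∉ (M l).cells) → f b = b := by
      intro b hb
      simp only [hf]
      rw [if_neg hb]
    have hcard : (mbBoxes Λ).card = (mbBoxes M).card := by
      rw [card_mbBoxes, card_mbBoxes]
      unfold isMP at hΛ hM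
      omega
    have hmaps : ∀ b ∈ mbBoxes Λ, f b ∈ mbBoxes M := by
      intro b hb
      rw [mem_mbBoxes] at hb
      by_cases hc : b.1 = l ∧ b.2 ∈ (Λ l).cells ∧ b.2 ∉ (M l).cells
      · obtain ⟨i, y, x⟩ := b
        obtain ⟨hi, hy, hy'⟩ := hc
        subst hi
        obtain ⟨y', x', hfe, _, _, ha, _⟩ := hfmove y x hy hy'
        rw [hfe, mem_mbBoxes]
        exact ha
      · rw [hfunmoved b hc, mem_mbBoxes]
        by_cases hil : b.1 = l
        · by_contra hnot
          exact hc ⟨hil, hil ▸ hb, hil ▸ hnot⟩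
        · exact h1 b.1 hil b.2 hb
    have hinj : ∀ a ∈ mbBoxes Λ, ∀ b ∈ mbBoxes Λ, f a = f b → a = b := by
      intro a ha b hb hab
      rw [mem_mbBoxes] at ha hb
      by_cases hca : a.1 = l ∧ a.2 ∈ (Λ l).cells ∧ a.2 ∉ (M l).cells
        <;> by_cases hcb : b.1 = l ∧ b.2 ∈ (Λ l).cells ∧ b.2 ∉ (M l).cells
      · obtain ⟨ia, ya, xa⟩ := a
        obtain ⟨ib, yb, xb⟩ := b
        obtain ⟨hia, hya, hya'⟩ := hca
        obtain ⟨hib, hyb, hyb'⟩ := hcb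
        subst hia
        subst hib
        obtain ⟨yA', xA', hfa, ea1, ea2, _, _⟩ := hfmove ya xa hya hya'
        obtain ⟨yB', xB', hfb, eb1, eb2, _, _⟩ := hfmove yb xb hyb hyb'
        rw [hfa, hfb] at hab
        simp only [Prod.mk.injEq] at hab
        obtain ⟨-, hy', hx'⟩ := hab
        simp only [Prod.mk.injEq]
        exact ⟨trivial, by omega, by omega⟩
      · obtain ⟨ia, ya, xa⟩ := a
        obtain ⟨hia, hya, hya'⟩ := hca
        subst hia
        obtain ⟨yA', xA', hfa, _, _, _, hnΛ⟩ := hfmove ya xa hya hya'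
        rw [hfa, hfunmoved b hcb] at hab
        exfalso
        apply hnΛ
        rw [← hab] at hb
        exact hb
      · obtain ⟨ib, yb, xb⟩ := b
        obtain ⟨hib, hyb, hyb'⟩ := hcb
        subst hib
        obtain ⟨yB', xB', hfb, _, _, _, hnΛ⟩ := hfmove yb xb hyb hyb'
        rw [hfb, hfunmoved a hca] at hab
        exfalso
        apply hnΛ
        rw [hab] at ha
        exact ha
      · rw [hfunmoved a hca, hfunmoved b hcb] at hab
        exact hab
    have hcont : ∀ b ∈ mbBoxes Λ, cont χ (f b) = cont χ b ∨ cont χ (f b) = cont χ b - d := by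
      intro b hb
      by_cases hc : b.1 = l ∧ b.2 ∈ (Λ l).cells ∧ b.2 ∉ (M l).cells
      · right
        obtain ⟨i, y, x⟩ := b
        obtain ⟨hi, hy, hy'⟩ := hc
        subst hi
        obtain ⟨y', x', hfe, e1, e2, _, _⟩ := hfmove y x hy hy'
        rw [hfe]
        have := hdval y x y' x' hy hy' e1 e2
        linarith
      · left
        rw [hfunmoved b hc]
    obtain ⟨hdir1, hdir2⟩ := contGE_of_maps χ Λ M f hcard hmaps hinj
    rcases lt_or_gt_of_ne hdne with hneg | hpos
    · exact Or.inr (hdir2 (fun b hb => by rcases hcont b hb with h | h <;> rw [h] <;> linarith))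
    · exact Or.inl (hdir1 (fun b hb => by rcases hcont b hb with h | h <;> rw [h] <;> linarith))
end
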